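/- arXiv:1505.02085 — 2 statements merged into one kernel-verified Lean document; each statement's English description precedes it below -/
import Mathlib

section
/- Let W, U, Z1, Z2, X be finite-valued random variables on a common probability space such that (i) W ⊥ (Z1, X); (ii) W ⊥ (Z2, X); (iii) Z1 ⊥ (Z2, X) given U; and (iv) W ⊥ Z1 given (U, Z2, X). Then I(W; Z2 | (Z1, X)) ≤ I(U; Z1). -/
open MeasureTheory ProbabilityTheory Real

/-- Shannon entropy of a finite-valued random variable. -/
noncomputable def Hent {Ω : Type*} [MeasurableSpace Ω] (μ : Measure Ω)
    {S : Type*} [Fintype S] (X : Ω → S) : ℝ :=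
  ∑ s : S, Real.negMulLog (μ (X ⁻¹' {s})).toReal

/-- Conditional entropy `H(X|Y) = H(X,Y) - H(Y)`. -/
noncomputable def HcondEnt {Ω : Type*} [MeasurableSpace Ω] (μ : Measure Ω)
    {S T : Type*} [Fintype S] [Fintype T] (X : Ω → S) (Y : Ω → T) : ℝ :=
  Hent μ (fun ω => (X ω, Y ω)) - Hent μ Y

/-- Mutual information `I(X;Y) = H(X) + H(Y) - H(X,Y)`. -/
noncomputable def MI {Ω : Type*} [MeasurableSpace Ω] (μ : Measure Ω)
    {S T : Type*} [Fintype S] [Fintype T] (X : Ω → S) (Y : Ω → T) : ℝ :=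
  Hent μ X + Hent μ Y - Hent μ (fun ω => (X ω, Y ω))

/-- Conditional mutual information `I(X;Y|Z) = H(X|Z) + H(Y|Z) - H((X,Y)|Z)`. -/
noncomputable def CMI {Ω : Type*} [MeasurableSpace Ω] (μ : Measure Ω)
    {S T U : Type*} [Fintype S] [Fintype T] [Fintype U]
    (X : Ω → S) (Y : Ω → T) (Z : Ω → U) : ℝ :=
  HcondEnt μ X Z + HcondEnt μ Y Z - HcondEnt μ (fun ω => (X ω, Y ω)) Z

/-- Independence of two finite-valued random variables: the joint law of the pair
is the product of the marginal laws (pointwise on atoms). -/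
def IndepRV {Ω : Type*} [MeasurableSpace Ω] (μ : Measure Ω)
    {S T : Type*} (X : Ω → S) (Y : Ω → T) : Prop :=
  ∀ x y, μ (X ⁻¹' {x} ∩ Y ⁻¹' {y}) = μ (X ⁻¹' {x}) * μ (Y ⁻¹' {y})

/-- Conditional independence of `X` and `Y` given `Z` for finite-valued random
variables: `P(X=x, Y=y, Z=z) * P(Z=z) = P(X=x, Z=z) * P(Y=y, Z=z)` for all atoms. -/
def CondIndepRV {Ω : Type*} [MeasurableSpace Ω] (μ : Measure Ω)
    {S T U : Type*} (X : Ω → S) (Y : Ω → T) (Z : Ω → U) : Prop :=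
  ∀ x y z, μ (X ⁻¹' {x} ∩ Y ⁻¹' {y} ∩ Z ⁻¹' {z}) * μ (Z ⁻¹' {z})
    = μ (X ⁻¹' {x} ∩ Z ⁻¹' {z}) * μ (Y ⁻¹' {y} ∩ Z ⁻¹' {z})

lemma pair_preimage {Ω S T : Type*} (X : Ω → S) (Y : Ω → T) (s : S) (t : T) :
    (fun ω => (X ω, Y ω)) ⁻¹' {(s, t)} = X ⁻¹' {s} ∩ Y ⁻¹' {t} := by
  ext ω; simp [Prod.ext_iff]

lemma Hent_comp {Ω : Type*} [MeasurableSpace Ω] (μ : Measure Ω)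
    {S T : Type*} [Fintype S] [Fintype T]
    (f : S → T) (hf : Function.Injective f) (Y : Ω → S) :
    Hent μ (fun ω => f (Y ω)) = Hent μ Y := by
  classical
  unfold Hent
  have key : ∀ s : S, (fun ω => f (Y ω)) ⁻¹' {f s} = Y ⁻¹' {s} := by
    intro s; ext ω; simp [hf.eq_iff]
  calc ∑ t : T, negMulLog (μ ((fun ω => f (Y ω)) ⁻¹' {t})).toReal
      = ∑ t ∈ Finset.univ.image f, negMulLog (μ ((fun ω => f (Y ω)) ⁻¹' {t})).toReal := by
        refine (Finset.sum_subset (Finset.subset_univ _) ?_).symm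
        intro t _ ht
        have h0 : (fun ω => f (Y ω)) ⁻¹' {t} = ∅ := by
          ext ω
          simp only [Set.mem_preimage, Set.mem_singleton_iff, Set.mem_empty_iff_false, iff_false]
          intro h; exact ht (Finset.mem_image.2 ⟨Y ω, Finset.mem_univ _, h⟩)
        simp [h0]
    _ = ∑ s : S, negMulLog (μ ((fun ω => f (Y ω)) ⁻¹' {f s})).toReal :=
        Finset.sum_image (fun a _ b _ h => hf h)
    _ = ∑ s : S, negMulLog (μ (Y ⁻¹' {s})).toReal := by simp_rw [key]

lemma sum_toReal_meas_inter {Ω : Type*} [MeasurableSpace Ω] (μ : Measure Ω) [IsProbabilityMeasure μ]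
    {T : Type*} [Fintype T] [MeasurableSpace T] [MeasurableSingletonClass T]
    (Y : Ω → T) (hY : Measurable Y) (A : Set Ω) (hA : MeasurableSet A) :
    ∑ t : T, (μ (A ∩ Y ⁻¹' {t})).toReal = (μ A).toReal := by
  rw [← ENNReal.toReal_sum (fun a _ => measure_ne_top μ _)]
  congr 1
  have : ∀ t : T, μ (A ∩ Y ⁻¹' {t}) = μ.restrict A (Y ⁻¹' {t}) := by
    intro t
    rw [Measure.restrict_apply (hY (measurableSet_singleton t)), Set.inter_comm]
  simp_rw [this]
  rw [sum_measure_preimage_singleton (μ := μ.restrict A) Finset.univ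
    (fun t _ => hY (measurableSet_singleton t))]
  simp [Measure.restrict_apply_univ]

lemma sum_toReal_meas {Ω : Type*} [MeasurableSpace Ω] (μ : Measure Ω) [IsProbabilityMeasure μ]
    {T : Type*} [Fintype T] [MeasurableSpace T] [MeasurableSingletonClass T]
    (Y : Ω → T) (hY : Measurable Y) :
    ∑ t : T, (μ (Y ⁻¹' {t})).toReal = 1 := by
  have := sum_toReal_meas_inter μ Y hY Set.univ MeasurableSet.univ
  simpa using this

lemma gibbs_pt {p q : ℝ} (hp : 0 ≤ p) (hq : 0 ≤ q) (h : q = 0 → p = 0) :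
    p * (Real.log q - Real.log p) ≤ q - p := by
  rcases eq_or_lt_of_le hp with h0 | h0
  · simp [← h0, hq]
  · have hq0 : 0 < q := lt_of_le_of_ne hq (fun e => by have := h e.symm; linarith)
    rw [show Real.log q - Real.log p = Real.log (q / p) from (Real.log_div hq0.ne' h0.ne').symm]
    have hlog := Real.log_le_sub_one_of_pos (div_pos hq0 h0)
    calc p * Real.log (q/p) ≤ p * (q/p - 1) := by nlinarith
      _ = q - p := by field_simp

section sums
variable {S T V : Type*} [Fintype S] [Fintype T] [Fintype V]

lemma sum3_a (p : S → T → V → ℝ) (a : S → V → ℝ) (hpa : ∀ s v, ∑ t, p s t v = a s v)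
    (g : S → V → ℝ) :
    ∑ s, ∑ t, ∑ v, p s t v * g s v = ∑ s, ∑ v, a s v * g s v := by
  refine Finset.sum_congr rfl fun s _ => ?_
  rw [Finset.sum_comm]
  exact Finset.sum_congr rfl fun v _ => by rw [← Finset.sum_mul, hpa]

lemma sum3_b (p : S → T → V → ℝ) (b : T → V → ℝ) (hpb : ∀ t v, ∑ s, p s t v = b t v)
    (g : T → V → ℝ) :
    ∑ s, ∑ t, ∑ v, p s t v * g t v = ∑ t, ∑ v, b t v * g t v := by
  rw [Finset.sum_comm]
  exact sum3_a (fun t s v => p s t v) b hpb g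

lemma sum3_c (p : S → T → V → ℝ) (a : S → V → ℝ) (c : V → ℝ)
    (hpa : ∀ s v, ∑ t, p s t v = a s v) (hac : ∀ v, ∑ s, a s v = c v) (g : V → ℝ) :
    ∑ s, ∑ t, ∑ v, p s t v * g v = ∑ v, c v * g v := by
  calc ∑ s, ∑ t, ∑ v, p s t v * g v
      = ∑ s, ∑ v, a s v * g v := Finset.sum_congr rfl fun s _ => by
        rw [Finset.sum_comm]
        exact Finset.sum_congr rfl fun v _ => by rw [← Finset.sum_mul, hpa]
    _ = ∑ v, (∑ s, a s v) * g v := by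
        rw [Finset.sum_comm]
        exact Finset.sum_congr rfl fun v _ => (Finset.sum_mul _ _ _).symm
    _ = ∑ v, c v * g v := by simp_rw [hac]

end sums

lemma log_split {p a b c : ℝ} (hp : 0 < p) (ha : 0 < a) (hb : 0 < b) (hc : 0 < c)
    (hpc : p * c = a * b) : Real.log p = Real.log a + Real.log b - Real.log c := by
  have hpe : p = a * b / c := by field_simp; linarith
  rw [hpe, Real.log_div (by positivity) hc.ne', Real.log_mul ha.ne' hb.ne']

lemma pos_pos_of_mul_pos {a b : ℝ} (h : 0 < a * b) (ha : 0 ≤ a) (hb : 0 ≤ b) :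
    0 < a ∧ 0 < b := by
  rcases pos_and_pos_or_neg_and_neg_of_mul_pos h with h' | ⟨h1, h2⟩
  · exact h'
  · constructor <;> linarith

lemma Hent_pair_eq {Ω : Type*} [MeasurableSpace Ω] (μ : Measure Ω)
    {S T : Type*} [Fintype S] [Fintype T] (A : Ω → S) (B : Ω → T) :
    Hent μ (fun ω => (A ω, B ω))
      = ∑ s : S, ∑ t : T, Real.negMulLog (μ (A ⁻¹' {s} ∩ B ⁻¹' {t})).toReal := by
  unfold Hent
  rw [Fintype.sum_prod_type]
  simp_rw [pair_preimage]

lemma triple_preimage {Ω S T V : Type*} (A : Ω → S) (B : Ω → T) (C : Ω → V) (s : S) (t : T) (v : V) :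
    (fun ω => ((A ω, B ω), C ω)) ⁻¹' {((s, t), v)} = A ⁻¹' {s} ∩ B ⁻¹' {t} ∩ C ⁻¹' {v} := by
  ext ω; simp [Prod.ext_iff, and_assoc]

lemma Hent_triple_eq {Ω : Type*} [MeasurableSpace Ω] (μ : Measure Ω)
    {S T V : Type*} [Fintype S] [Fintype T] [Fintype V] (A : Ω → S) (B : Ω → T) (C : Ω → V) :
    Hent μ (fun ω => ((A ω, B ω), C ω))
      = ∑ s : S, ∑ t : T, ∑ v : V,
          Real.negMulLog (μ (A ⁻¹' {s} ∩ B ⁻¹' {t} ∩ C ⁻¹' {v})).toReal := by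
  unfold Hent
  rw [Fintype.sum_prod_type]
  rw [Fintype.sum_prod_type]
  simp_rw [triple_preimage]

lemma Hent_pair_of_indep {Ω : Type*} [MeasurableSpace Ω] (μ : Measure Ω) [IsProbabilityMeasure μ]
    {S T : Type*} [Fintype S] [Fintype T]
    [MeasurableSpace S] [MeasurableSingletonClass S]
    [MeasurableSpace T] [MeasurableSingletonClass T]
    (A : Ω → S) (B : Ω → T) (hA : Measurable A) (hB : Measurable B)
    (h : IndepRV μ A B) :
    Hent μ (fun ω => (A ω, B ω)) = Hent μ A + Hent μ B := by
  have hsA : ∑ s : S, (μ (A ⁻¹' {s})).toReal = 1 := sum_toReal_meas μ A hA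
  have hsB : ∑ t : T, (μ (B ⁻¹' {t})).toReal = 1 := sum_toReal_meas μ B hB
  rw [Hent_pair_eq]
  unfold Hent
  calc ∑ s : S, ∑ t : T, Real.negMulLog (μ (A ⁻¹' {s} ∩ B ⁻¹' {t})).toReal
      = ∑ s : S, ∑ t : T, ((μ (B ⁻¹' {t})).toReal * Real.negMulLog (μ (A ⁻¹' {s})).toReal
          + (μ (A ⁻¹' {s})).toReal * Real.negMulLog (μ (B ⁻¹' {t})).toReal) := by
        refine Finset.sum_congr rfl fun s _ => Finset.sum_congr rfl fun t _ => ?_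
        rw [h s t, ENNReal.toReal_mul, Real.negMulLog_mul]
    _ = ∑ s : S, ((∑ t : T, (μ (B ⁻¹' {t})).toReal) * Real.negMulLog (μ (A ⁻¹' {s})).toReal
          + (μ (A ⁻¹' {s})).toReal * ∑ t : T, Real.negMulLog (μ (B ⁻¹' {t})).toReal) := by
        refine Finset.sum_congr rfl fun s _ => ?_
        rw [Finset.sum_add_distrib, Finset.sum_mul, Finset.mul_sum]
    _ = ∑ s : S, (Real.negMulLog (μ (A ⁻¹' {s})).toReal
          + (μ (A ⁻¹' {s})).toReal * ∑ t : T, Real.negMulLog (μ (B ⁻¹' {t})).toReal) := by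
        simp [hsB]
    _ = (∑ s : S, Real.negMulLog (μ (A ⁻¹' {s})).toReal)
          + ∑ t : T, Real.negMulLog (μ (B ⁻¹' {t})).toReal := by
        rw [Finset.sum_add_distrib, ← Finset.sum_mul, hsA, one_mul]

lemma pt_eq {p a b c : ℝ} (hp : 0 ≤ p) (ha : 0 ≤ a) (hb : 0 ≤ b)
    (hpc : p ≤ c) (habeq : p * c = a * b) :
    Real.negMulLog p = -(p * Real.log a) - p * Real.log b + p * Real.log c := by
  rcases eq_or_lt_of_le hp with hp0 | hp0
  · rw [← hp0]; simp
  · have hc0 : 0 < c := lt_of_lt_of_le hp0 hpc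
    have hab : 0 < a * b := habeq ▸ mul_pos hp0 hc0
    obtain ⟨ha0, hb0⟩ := pos_pos_of_mul_pos hab ha hb
    have hlog := log_split hp0 ha0 hb0 hc0 habeq
    simp only [Real.negMulLog]
    rw [hlog]; ring


lemma pt_le {p a b c : ℝ} (hp : 0 ≤ p) (ha : 0 ≤ a) (hb : 0 ≤ b)
    (hpa : p ≤ a) (hpb : p ≤ b) (hpc : p ≤ c) :
    Real.negMulLog p ≤ -(p * Real.log a) - p * Real.log b + p * Real.log c
      + (a * b / c - p) := by
  have hc : 0 ≤ c := le_trans hp hpc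
  have hq : 0 ≤ a * b / c := div_nonneg (mul_nonneg ha hb) hc
  have hqz : a * b / c = 0 → p = 0 := by
    intro hq0
    by_contra hp0
    have hp1 : 0 < p := lt_of_le_of_ne hp (Ne.symm hp0)
    have : 0 < a * b / c := div_pos (mul_pos (lt_of_lt_of_le hp1 hpa) (lt_of_lt_of_le hp1 hpb))
      (lt_of_lt_of_le hp1 hpc)
    linarith
  have hg := gibbs_pt hp hq hqz
  rw [mul_sub] at hg
  have plogq : p * Real.log (a * b / c) = p * Real.log a + p * Real.log b - p * Real.log c := by
    rcases eq_or_lt_of_le hp with hp0 | hp0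
    · rw [← hp0]; ring
    · have ha0 : 0 < a := lt_of_lt_of_le hp0 hpa
      have hb0 : 0 < b := lt_of_lt_of_le hp0 hpb
      have hc0 : 0 < c := lt_of_lt_of_le hp0 hpc
      rw [Real.log_div (by positivity) hc0.ne', Real.log_mul ha0.ne' hb0.ne']
      ring
  simp only [Real.negMulLog, neg_mul]
  linarith

lemma Hent_comp' {Ω : Type*} [MeasurableSpace Ω] (μ : Measure Ω)
    {S T : Type*} [Fintype S] [Fintype T]
    (f : S → T) (hf : Function.Injective f) (Y : Ω → S) (Z : Ω → T)
    (hZY : ∀ ω, Z ω = f (Y ω)) :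
    Hent μ Z = Hent μ Y := by
  have : Z = fun ω => f (Y ω) := funext hZY
  rw [this, Hent_comp μ f hf Y]


section main
variable {Ω : Type*} [MeasurableSpace Ω] (μ : Measure Ω) [IsProbabilityMeasure μ]
  {S T V : Type*} [Fintype S] [Fintype T] [Fintype V]
  [MeasurableSpace S] [MeasurableSingletonClass S]
  [MeasurableSpace T] [MeasurableSingletonClass T]
  [MeasurableSpace V] [MeasurableSingletonClass V]

lemma marg_B (A : Ω → S) (B : Ω → T) (C : Ω → V)
    (hA : Measurable A) (hB : Measurable B) (hC : Measurable C) (s : S) (v : V) :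
    ∑ t : T, (μ (A ⁻¹' {s} ∩ B ⁻¹' {t} ∩ C ⁻¹' {v})).toReal
      = (μ (A ⁻¹' {s} ∩ C ⁻¹' {v})).toReal := by
  have e : ∀ t : T, A ⁻¹' {s} ∩ B ⁻¹' {t} ∩ C ⁻¹' {v}
      = (A ⁻¹' {s} ∩ C ⁻¹' {v}) ∩ B ⁻¹' {t} := fun t => by
    ext ω; simp only [Set.mem_inter_iff, Set.mem_preimage]; tauto
  simp_rw [e]
  exact sum_toReal_meas_inter μ B hB _
    ((hA (measurableSet_singleton s)).inter (hC (measurableSet_singleton v)))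

lemma marg_A (A : Ω → S) (B : Ω → T) (C : Ω → V)
    (hA : Measurable A) (hB : Measurable B) (hC : Measurable C) (t : T) (v : V) :
    ∑ s : S, (μ (A ⁻¹' {s} ∩ B ⁻¹' {t} ∩ C ⁻¹' {v})).toReal
      = (μ (B ⁻¹' {t} ∩ C ⁻¹' {v})).toReal := by
  have e : ∀ s : S, A ⁻¹' {s} ∩ B ⁻¹' {t} ∩ C ⁻¹' {v}
      = (B ⁻¹' {t} ∩ C ⁻¹' {v}) ∩ A ⁻¹' {s} := fun s => by
    ext ω; simp only [Set.mem_inter_iff, Set.mem_preimage]; tauto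
  simp_rw [e]
  exact sum_toReal_meas_inter μ A hA _
    ((hB (measurableSet_singleton t)).inter (hC (measurableSet_singleton v)))

lemma marg_AC (A : Ω → S) (C : Ω → V)
    (hA : Measurable A) (hC : Measurable C) (v : V) :
    ∑ s : S, (μ (A ⁻¹' {s} ∩ C ⁻¹' {v})).toReal = (μ (C ⁻¹' {v})).toReal := by
  have e : ∀ s : S, A ⁻¹' {s} ∩ C ⁻¹' {v} = C ⁻¹' {v} ∩ A ⁻¹' {s} := fun s => Set.inter_comm _ _
  simp_rw [e]
  exact sum_toReal_meas_inter μ A hA _ (hC (measurableSet_singleton v))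

lemma Hent_condIndep (A : Ω → S) (B : Ω → T) (C : Ω → V)
    (hA : Measurable A) (hB : Measurable B) (hC : Measurable C)
    (h : CondIndepRV μ A B C) :
    Hent μ (fun ω => ((A ω, B ω), C ω))
      = Hent μ (fun ω => (A ω, C ω)) + Hent μ (fun ω => (B ω, C ω)) - Hent μ C := by
  rw [Hent_triple_eq, Hent_pair_eq, Hent_pair_eq]
  unfold Hent
  have pt : ∀ s t v, Real.negMulLog (μ (A ⁻¹' {s} ∩ B ⁻¹' {t} ∩ C ⁻¹' {v})).toReal
      = -((μ (A ⁻¹' {s} ∩ B ⁻¹' {t} ∩ C ⁻¹' {v})).toReal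
            * Real.log (μ (A ⁻¹' {s} ∩ C ⁻¹' {v})).toReal)
        - (μ (A ⁻¹' {s} ∩ B ⁻¹' {t} ∩ C ⁻¹' {v})).toReal
            * Real.log (μ (B ⁻¹' {t} ∩ C ⁻¹' {v})).toReal
        + (μ (A ⁻¹' {s} ∩ B ⁻¹' {t} ∩ C ⁻¹' {v})).toReal
            * Real.log (μ (C ⁻¹' {v})).toReal := by
    intro s t v
    exact pt_eq ENNReal.toReal_nonneg ENNReal.toReal_nonneg ENNReal.toReal_nonneg
      (ENNReal.toReal_mono (measure_ne_top μ _) (measure_mono Set.inter_subset_right))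
      (by have := congrArg ENNReal.toReal (h s t v)
          rwa [ENNReal.toReal_mul, ENNReal.toReal_mul] at this)
  calc ∑ s : S, ∑ t : T, ∑ v : V, Real.negMulLog (μ (A ⁻¹' {s} ∩ B ⁻¹' {t} ∩ C ⁻¹' {v})).toReal
      = ∑ s : S, ∑ t : T, ∑ v : V,
          (-((μ (A ⁻¹' {s} ∩ B ⁻¹' {t} ∩ C ⁻¹' {v})).toReal
              * Real.log (μ (A ⁻¹' {s} ∩ C ⁻¹' {v})).toReal)
            - (μ (A ⁻¹' {s} ∩ B ⁻¹' {t} ∩ C ⁻¹' {v})).toReal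
              * Real.log (μ (B ⁻¹' {t} ∩ C ⁻¹' {v})).toReal
            + (μ (A ⁻¹' {s} ∩ B ⁻¹' {t} ∩ C ⁻¹' {v})).toReal
              * Real.log (μ (C ⁻¹' {v})).toReal) := by
        exact Finset.sum_congr rfl fun s _ => Finset.sum_congr rfl fun t _ =>
          Finset.sum_congr rfl fun v _ => pt s t v
    _ = -(∑ s : S, ∑ t : T, ∑ v : V, (μ (A ⁻¹' {s} ∩ B ⁻¹' {t} ∩ C ⁻¹' {v})).toReal
              * Real.log (μ (A ⁻¹' {s} ∩ C ⁻¹' {v})).toReal)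
        - (∑ s : S, ∑ t : T, ∑ v : V, (μ (A ⁻¹' {s} ∩ B ⁻¹' {t} ∩ C ⁻¹' {v})).toReal
              * Real.log (μ (B ⁻¹' {t} ∩ C ⁻¹' {v})).toReal)
        + ∑ s : S, ∑ t : T, ∑ v : V, (μ (A ⁻¹' {s} ∩ B ⁻¹' {t} ∩ C ⁻¹' {v})).toReal
              * Real.log (μ (C ⁻¹' {v})).toReal := by
        simp only [Finset.sum_add_distrib, Finset.sum_sub_distrib, Finset.sum_neg_distrib]
    _ = -(∑ s : S, ∑ v : V, (μ (A ⁻¹' {s} ∩ C ⁻¹' {v})).toReal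
              * Real.log (μ (A ⁻¹' {s} ∩ C ⁻¹' {v})).toReal)
        - (∑ t : T, ∑ v : V, (μ (B ⁻¹' {t} ∩ C ⁻¹' {v})).toReal
              * Real.log (μ (B ⁻¹' {t} ∩ C ⁻¹' {v})).toReal)
        + ∑ v : V, (μ (C ⁻¹' {v})).toReal * Real.log (μ (C ⁻¹' {v})).toReal := by
        congr 2
        · congr 1
          exact sum3_a (fun s t v => (μ (A ⁻¹' {s} ∩ B ⁻¹' {t} ∩ C ⁻¹' {v})).toReal)
            (fun s v => (μ (A ⁻¹' {s} ∩ C ⁻¹' {v})).toReal)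
            (fun s v => marg_B μ A B C hA hB hC s v)
            (fun s v => Real.log (μ (A ⁻¹' {s} ∩ C ⁻¹' {v})).toReal)
        · exact sum3_b (fun s t v => (μ (A ⁻¹' {s} ∩ B ⁻¹' {t} ∩ C ⁻¹' {v})).toReal)
            (fun t v => (μ (B ⁻¹' {t} ∩ C ⁻¹' {v})).toReal)
            (fun t v => marg_A μ A B C hA hB hC t v)
            (fun t v => Real.log (μ (B ⁻¹' {t} ∩ C ⁻¹' {v})).toReal)
        · exact sum3_c (fun s t v => (μ (A ⁻¹' {s} ∩ B ⁻¹' {t} ∩ C ⁻¹' {v})).toReal)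
            (fun s v => (μ (A ⁻¹' {s} ∩ C ⁻¹' {v})).toReal)
            (fun v => (μ (C ⁻¹' {v})).toReal)
            (fun s v => marg_B μ A B C hA hB hC s v)
            (fun v => marg_AC μ A C hA hC v)
            (fun v => Real.log (μ (C ⁻¹' {v})).toReal)
    _ = (∑ s : S, ∑ v : V, Real.negMulLog (μ (A ⁻¹' {s} ∩ C ⁻¹' {v})).toReal)
        + (∑ t : T, ∑ v : V, Real.negMulLog (μ (B ⁻¹' {t} ∩ C ⁻¹' {v})).toReal)
        - ∑ v : V, Real.negMulLog (μ (C ⁻¹' {v})).toReal := by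
        simp only [Real.negMulLog, neg_mul]
        rw [Finset.sum_neg_distrib]
        simp only [Finset.sum_neg_distrib]
        ring

lemma Hent_submodular (A : Ω → S) (B : Ω → T) (C : Ω → V)
    (hA : Measurable A) (hB : Measurable B) (hC : Measurable C) :
    Hent μ (fun ω => ((A ω, B ω), C ω)) + Hent μ C
      ≤ Hent μ (fun ω => (A ω, C ω)) + Hent μ (fun ω => (B ω, C ω)) := by
  rw [Hent_triple_eq, Hent_pair_eq, Hent_pair_eq]
  unfold Hent
  have key : ∑ s : S, ∑ t : T, ∑ v : V,
        Real.negMulLog (μ (A ⁻¹' {s} ∩ B ⁻¹' {t} ∩ C ⁻¹' {v})).toReal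
      ≤ ∑ s : S, ∑ t : T, ∑ v : V,
        (-((μ (A ⁻¹' {s} ∩ B ⁻¹' {t} ∩ C ⁻¹' {v})).toReal
              * Real.log (μ (A ⁻¹' {s} ∩ C ⁻¹' {v})).toReal)
          - (μ (A ⁻¹' {s} ∩ B ⁻¹' {t} ∩ C ⁻¹' {v})).toReal
              * Real.log (μ (B ⁻¹' {t} ∩ C ⁻¹' {v})).toReal
          + (μ (A ⁻¹' {s} ∩ B ⁻¹' {t} ∩ C ⁻¹' {v})).toReal
              * Real.log (μ (C ⁻¹' {v})).toReal
          + ((μ (A ⁻¹' {s} ∩ C ⁻¹' {v})).toReal * (μ (B ⁻¹' {t} ∩ C ⁻¹' {v})).toReal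
              / (μ (C ⁻¹' {v})).toReal
            - (μ (A ⁻¹' {s} ∩ B ⁻¹' {t} ∩ C ⁻¹' {v})).toReal)) := by
    refine Finset.sum_le_sum fun s _ => Finset.sum_le_sum fun t _ =>
      Finset.sum_le_sum fun v _ => ?_
    exact pt_le ENNReal.toReal_nonneg ENNReal.toReal_nonneg ENNReal.toReal_nonneg
      (ENNReal.toReal_mono (measure_ne_top μ _)
        (measure_mono (by intro ω hω; exact ⟨hω.1.1, hω.2⟩)))
      (ENNReal.toReal_mono (measure_ne_top μ _)
        (measure_mono (by intro ω hω; exact ⟨hω.1.2, hω.2⟩)))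
      (ENNReal.toReal_mono (measure_ne_top μ _) (measure_mono Set.inter_subset_right))
  have split : ∑ s : S, ∑ t : T, ∑ v : V,
        (-((μ (A ⁻¹' {s} ∩ B ⁻¹' {t} ∩ C ⁻¹' {v})).toReal
              * Real.log (μ (A ⁻¹' {s} ∩ C ⁻¹' {v})).toReal)
          - (μ (A ⁻¹' {s} ∩ B ⁻¹' {t} ∩ C ⁻¹' {v})).toReal
              * Real.log (μ (B ⁻¹' {t} ∩ C ⁻¹' {v})).toReal
          + (μ (A ⁻¹' {s} ∩ B ⁻¹' {t} ∩ C ⁻¹' {v})).toReal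
              * Real.log (μ (C ⁻¹' {v})).toReal
          + ((μ (A ⁻¹' {s} ∩ C ⁻¹' {v})).toReal * (μ (B ⁻¹' {t} ∩ C ⁻¹' {v})).toReal
              / (μ (C ⁻¹' {v})).toReal
            - (μ (A ⁻¹' {s} ∩ B ⁻¹' {t} ∩ C ⁻¹' {v})).toReal))
      = -(∑ s : S, ∑ t : T, ∑ v : V, (μ (A ⁻¹' {s} ∩ B ⁻¹' {t} ∩ C ⁻¹' {v})).toReal
              * Real.log (μ (A ⁻¹' {s} ∩ C ⁻¹' {v})).toReal)
        - (∑ s : S, ∑ t : T, ∑ v : V, (μ (A ⁻¹' {s} ∩ B ⁻¹' {t} ∩ C ⁻¹' {v})).toReal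
              * Real.log (μ (B ⁻¹' {t} ∩ C ⁻¹' {v})).toReal)
        + (∑ s : S, ∑ t : T, ∑ v : V, (μ (A ⁻¹' {s} ∩ B ⁻¹' {t} ∩ C ⁻¹' {v})).toReal
              * Real.log (μ (C ⁻¹' {v})).toReal)
        + ((∑ s : S, ∑ t : T, ∑ v : V, (μ (A ⁻¹' {s} ∩ C ⁻¹' {v})).toReal
              * (μ (B ⁻¹' {t} ∩ C ⁻¹' {v})).toReal / (μ (C ⁻¹' {v})).toReal)
          - ∑ s : S, ∑ t : T, ∑ v : V, (μ (A ⁻¹' {s} ∩ B ⁻¹' {t} ∩ C ⁻¹' {v})).toReal) := by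
    simp only [Finset.sum_add_distrib, Finset.sum_sub_distrib, Finset.sum_neg_distrib]
  have TA := sum3_a (fun s t v => (μ (A ⁻¹' {s} ∩ B ⁻¹' {t} ∩ C ⁻¹' {v})).toReal)
    (fun s v => (μ (A ⁻¹' {s} ∩ C ⁻¹' {v})).toReal)
    (fun s v => marg_B μ A B C hA hB hC s v)
    (fun s v => Real.log (μ (A ⁻¹' {s} ∩ C ⁻¹' {v})).toReal)
  have TB := sum3_b (fun s t v => (μ (A ⁻¹' {s} ∩ B ⁻¹' {t} ∩ C ⁻¹' {v})).toReal)
    (fun t v => (μ (B ⁻¹' {t} ∩ C ⁻¹' {v})).toReal)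
    (fun t v => marg_A μ A B C hA hB hC t v)
    (fun t v => Real.log (μ (B ⁻¹' {t} ∩ C ⁻¹' {v})).toReal)
  have TC := sum3_c (fun s t v => (μ (A ⁻¹' {s} ∩ B ⁻¹' {t} ∩ C ⁻¹' {v})).toReal)
    (fun s v => (μ (A ⁻¹' {s} ∩ C ⁻¹' {v})).toReal)
    (fun v => (μ (C ⁻¹' {v})).toReal)
    (fun s v => marg_B μ A B C hA hB hC s v)
    (fun v => marg_AC μ A C hA hC v)
    (fun v => Real.log (μ (C ⁻¹' {v})).toReal)
  have TP : ∑ s : S, ∑ t : T, ∑ v : V, (μ (A ⁻¹' {s} ∩ B ⁻¹' {t} ∩ C ⁻¹' {v})).toReal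
      = ∑ v : V, (μ (C ⁻¹' {v})).toReal := by
    have := sum3_c (fun s t v => (μ (A ⁻¹' {s} ∩ B ⁻¹' {t} ∩ C ⁻¹' {v})).toReal)
      (fun s v => (μ (A ⁻¹' {s} ∩ C ⁻¹' {v})).toReal)
      (fun v => (μ (C ⁻¹' {v})).toReal)
      (fun s v => marg_B μ A B C hA hB hC s v)
      (fun v => marg_AC μ A C hA hC v)
      (fun _ => (1:ℝ))
    simpa using this
  have TQ : ∑ s : S, ∑ t : T, ∑ v : V, (μ (A ⁻¹' {s} ∩ C ⁻¹' {v})).toReal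
        * (μ (B ⁻¹' {t} ∩ C ⁻¹' {v})).toReal / (μ (C ⁻¹' {v})).toReal
      ≤ ∑ v : V, (μ (C ⁻¹' {v})).toReal := by
    have step1 : ∀ s : S, ∑ t : T, ∑ v : V, (μ (A ⁻¹' {s} ∩ C ⁻¹' {v})).toReal
          * (μ (B ⁻¹' {t} ∩ C ⁻¹' {v})).toReal / (μ (C ⁻¹' {v})).toReal
        ≤ ∑ v : V, (μ (A ⁻¹' {s} ∩ C ⁻¹' {v})).toReal := by
      intro s
      rw [Finset.sum_comm]
      refine Finset.sum_le_sum fun v _ => ?_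
      have : ∑ t : T, (μ (A ⁻¹' {s} ∩ C ⁻¹' {v})).toReal
            * (μ (B ⁻¹' {t} ∩ C ⁻¹' {v})).toReal / (μ (C ⁻¹' {v})).toReal
          = (μ (A ⁻¹' {s} ∩ C ⁻¹' {v})).toReal * (μ (C ⁻¹' {v})).toReal
            / (μ (C ⁻¹' {v})).toReal := by
        rw [← Finset.sum_div, ← Finset.mul_sum, marg_AC μ B C hB hC v]
      rw [this]
      rcases eq_or_ne ((μ (C ⁻¹' {v})).toReal) 0 with hc | hc
      · simp [hc]
      · rw [mul_div_assoc, div_self hc, mul_one]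
    calc ∑ s : S, ∑ t : T, ∑ v : V, (μ (A ⁻¹' {s} ∩ C ⁻¹' {v})).toReal
          * (μ (B ⁻¹' {t} ∩ C ⁻¹' {v})).toReal / (μ (C ⁻¹' {v})).toReal
        ≤ ∑ s : S, ∑ v : V, (μ (A ⁻¹' {s} ∩ C ⁻¹' {v})).toReal :=
          Finset.sum_le_sum fun s _ => step1 s
      _ = ∑ v : V, (μ (C ⁻¹' {v})).toReal := by
          rw [Finset.sum_comm]
          exact Finset.sum_congr rfl fun v _ => marg_AC μ A C hA hC v
  have cA : ∑ s : S, ∑ v : V, (μ (A ⁻¹' {s} ∩ C ⁻¹' {v})).toReal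
        * Real.log (μ (A ⁻¹' {s} ∩ C ⁻¹' {v})).toReal
      = -∑ s : S, ∑ v : V, Real.negMulLog (μ (A ⁻¹' {s} ∩ C ⁻¹' {v})).toReal := by
    simp [Real.negMulLog, Finset.sum_neg_distrib]
  have cB : ∑ t : T, ∑ v : V, (μ (B ⁻¹' {t} ∩ C ⁻¹' {v})).toReal
        * Real.log (μ (B ⁻¹' {t} ∩ C ⁻¹' {v})).toReal
      = -∑ t : T, ∑ v : V, Real.negMulLog (μ (B ⁻¹' {t} ∩ C ⁻¹' {v})).toReal := by
    simp [Real.negMulLog, Finset.sum_neg_distrib]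
  have cC : ∑ v : V, (μ (C ⁻¹' {v})).toReal * Real.log (μ (C ⁻¹' {v})).toReal
      = -∑ v : V, Real.negMulLog (μ (C ⁻¹' {v})).toReal := by
    simp [Real.negMulLog, Finset.sum_neg_distrib]
  rw [split] at key
  linarith [key, TA, TB, TC, TP, TQ, cA, cB, cC]

end main

lemma Hent_unit {Ω : Type*} [MeasurableSpace Ω] (μ : Measure Ω) [IsProbabilityMeasure μ] :
    Hent μ (fun _ : Ω => ()) = 0 := by
  unfold Hent
  have : ((fun _ : Ω => ()) ⁻¹' {()}) = Set.univ := Set.eq_univ_of_forall fun ω => rfl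
  simp [this]

lemma Hent_pair_le {Ω : Type*} [MeasurableSpace Ω] (μ : Measure Ω) [IsProbabilityMeasure μ]
    {S T : Type*} [Fintype S] [Fintype T]
    [MeasurableSpace S] [MeasurableSingletonClass S]
    [MeasurableSpace T] [MeasurableSingletonClass T]
    (A : Ω → S) (B : Ω → T) (hA : Measurable A) (hB : Measurable B) :
    Hent μ (fun ω => (A ω, B ω)) ≤ Hent μ A + Hent μ B := by
  have hsub : Hent μ (fun ω => ((A ω, B ω), ())) + Hent μ (fun _ : Ω => ())
      ≤ Hent μ (fun ω => (A ω, ())) + Hent μ (fun ω => (B ω, ())) :=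
    Hent_submodular μ A B (fun _ => ()) hA hB measurable_const
  have e1 : Hent μ (fun ω => ((A ω, B ω), ())) = Hent μ (fun ω => (A ω, B ω)) :=
    Hent_comp' μ (fun p => (p, ())) (fun a b h => by simpa using h) _ _ (fun ω => rfl)
  have e2 : Hent μ (fun ω => (A ω, ())) = Hent μ A :=
    Hent_comp' μ (fun p => (p, ())) (fun a b h => by simpa using h) _ _ (fun ω => rfl)
  have e3 : Hent μ (fun ω => (B ω, ())) = Hent μ B :=
    Hent_comp' μ (fun p => (p, ())) (fun a b h => by simpa using h) _ _ (fun ω => rfl)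
  have e4 := Hent_unit μ
  linarith

set_option maxHeartbeats 2000000 in
/-- If `W ⊥ (Z1, X)`, `W ⊥ (Z2, X)`, `Z1 ⊥ (Z2, X)` given `U`, and
`W ⊥ Z1` given `(U, Z2, X)`, then `I(W; Z2 | (Z1, X)) ≤ I(U; Z1)`. -/
theorem leakage_le_key_leakage
    {Ω : Type*} [MeasurableSpace Ω] (μ : Measure Ω) [IsProbabilityMeasure μ]
    {α β γ δ ε' : Type*} [Fintype α] [Fintype β] [Fintype γ] [Fintype δ] [Fintype ε']
    [MeasurableSpace α] [MeasurableSingletonClass α]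
    [MeasurableSpace β] [MeasurableSingletonClass β]
    [MeasurableSpace γ] [MeasurableSingletonClass γ]
    [MeasurableSpace δ] [MeasurableSingletonClass δ]
    [MeasurableSpace ε'] [MeasurableSingletonClass ε']
    (W : Ω → α) (U : Ω → β) (Z1 : Ω → γ) (Z2 : Ω → δ) (X : Ω → ε')
    (hW : Measurable W) (hU : Measurable U) (hZ1 : Measurable Z1)
    (hZ2 : Measurable Z2) (hX : Measurable X)
    (h1 : IndepRV μ W (fun ω => (Z1 ω, X ω)))
    (h2 : IndepRV μ W (fun ω => (Z2 ω, X ω)))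
    (h3 : CondIndepRV μ Z1 (fun ω => (Z2 ω, X ω)) U)
    (h4 : CondIndepRV μ W Z1 (fun ω => (U ω, Z2 ω, X ω))) :
    CMI μ W Z2 (fun ω => (Z1 ω, X ω)) ≤ MI μ U Z1 := by
  have F1 : Hent μ (fun ω => (W ω, (Z1 ω, X ω)))
      = Hent μ W + Hent μ (fun ω => (Z1 ω, X ω)) :=
    Hent_pair_of_indep μ W (fun ω => (Z1 ω, X ω)) hW (hZ1.prodMk hX) h1
  have F2 : Hent μ (fun ω => (W ω, (Z2 ω, X ω)))
      = Hent μ W + Hent μ (fun ω => (Z2 ω, X ω)) :=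
    Hent_pair_of_indep μ W (fun ω => (Z2 ω, X ω)) hW (hZ2.prodMk hX) h2
  have F3 : Hent μ (fun ω => ((Z1 ω, (Z2 ω, X ω)), U ω))
      = Hent μ (fun ω => (Z1 ω, U ω)) + Hent μ (fun ω => ((Z2 ω, X ω), U ω)) - Hent μ U :=
    Hent_condIndep μ Z1 (fun ω => (Z2 ω, X ω)) U hZ1 (hZ2.prodMk hX) hU h3
  have F4 : Hent μ (fun ω => ((W ω, Z1 ω), (U ω, (Z2 ω, X ω))))
      = Hent μ (fun ω => (W ω, (U ω, (Z2 ω, X ω))))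
        + Hent μ (fun ω => (Z1 ω, (U ω, (Z2 ω, X ω))))
        - Hent μ (fun ω => (U ω, (Z2 ω, X ω))) :=
    Hent_condIndep μ W Z1 (fun ω => (U ω, (Z2 ω, X ω))) hW hZ1
      (hU.prodMk (hZ2.prodMk hX)) h4
  have Ga : Hent μ (fun ω => ((U ω, Z1 ω), (W ω, (Z2 ω, X ω))))
        + Hent μ (fun ω => (W ω, (Z2 ω, X ω)))
      ≤ Hent μ (fun ω => (U ω, (W ω, (Z2 ω, X ω))))
        + Hent μ (fun ω => (Z1 ω, (W ω, (Z2 ω, X ω)))) :=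
    Hent_submodular μ U Z1 (fun ω => (W ω, (Z2 ω, X ω))) hU hZ1
      (hW.prodMk (hZ2.prodMk hX))
  have Gb : Hent μ (fun ω => (Z1 ω, (Z2 ω, X ω)))
      ≤ Hent μ Z1 + Hent μ (fun ω => (Z2 ω, X ω)) :=
    Hent_pair_le μ Z1 (fun ω => (Z2 ω, X ω)) hZ1 (hZ2.prodMk hX)
  have r1 : Hent μ (fun ω => (Z2 ω, (Z1 ω, X ω)))
      = Hent μ (fun ω => (Z1 ω, (Z2 ω, X ω))) :=
    Hent_comp' μ (fun p => (p.2.1, (p.1, p.2.2)))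
      (by rintro ⟨a1, a2, a3⟩ ⟨b1, b2, b3⟩ h; simp only [Prod.mk.injEq] at h ⊢; tauto)
      (fun ω => (Z1 ω, (Z2 ω, X ω))) _ (fun ω => rfl)
  have r2 : Hent μ (fun ω => ((W ω, Z2 ω), (Z1 ω, X ω)))
      = Hent μ (fun ω => (W ω, (Z1 ω, (Z2 ω, X ω)))) :=
    Hent_comp' μ (fun p => ((p.1, p.2.2.1), (p.2.1, p.2.2.2)))
      (by rintro ⟨a1, a2, a3, a4⟩ ⟨b1, b2, b3, b4⟩ h; simp only [Prod.mk.injEq] at h ⊢; tauto)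
      (fun ω => (W ω, (Z1 ω, (Z2 ω, X ω)))) _ (fun ω => rfl)
  have r3 : Hent μ (fun ω => ((Z1 ω, (Z2 ω, X ω)), U ω))
      = Hent μ (fun ω => (U ω, (Z1 ω, (Z2 ω, X ω)))) :=
    Hent_comp' μ (fun p => ((p.2.1, p.2.2), p.1))
      (by rintro ⟨a1, a2, a3⟩ ⟨b1, b2, b3⟩ h; simp only [Prod.mk.injEq] at h ⊢; tauto)
      (fun ω => (U ω, (Z1 ω, (Z2 ω, X ω)))) _ (fun ω => rfl)
  have r4 : Hent μ (fun ω => (Z1 ω, U ω)) = Hent μ (fun ω => (U ω, Z1 ω)) :=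
    Hent_comp' μ Prod.swap Prod.swap_injective (fun ω => (U ω, Z1 ω)) _ (fun ω => rfl)
  have r5 : Hent μ (fun ω => ((Z2 ω, X ω), U ω))
      = Hent μ (fun ω => (U ω, (Z2 ω, X ω))) :=
    Hent_comp' μ Prod.swap Prod.swap_injective (fun ω => (U ω, (Z2 ω, X ω))) _ (fun ω => rfl)
  have r6 : Hent μ (fun ω => ((W ω, Z1 ω), (U ω, (Z2 ω, X ω))))
      = Hent μ (fun ω => (W ω, (U ω, (Z1 ω, (Z2 ω, X ω))))) :=
    Hent_comp' μ (fun p => ((p.1, p.2.2.1), (p.2.1, p.2.2.2)))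
      (by rintro ⟨a1, a2, a3, a4⟩ ⟨b1, b2, b3, b4⟩ h; simp only [Prod.mk.injEq] at h ⊢; tauto)
      (fun ω => (W ω, (U ω, (Z1 ω, (Z2 ω, X ω))))) _ (fun ω => rfl)
  have r7 : Hent μ (fun ω => (Z1 ω, (U ω, (Z2 ω, X ω))))
      = Hent μ (fun ω => (U ω, (Z1 ω, (Z2 ω, X ω)))) :=
    Hent_comp' μ (fun p => (p.2.1, (p.1, p.2.2)))
      (by rintro ⟨a1, a2, a3⟩ ⟨b1, b2, b3⟩ h; simp only [Prod.mk.injEq] at h ⊢; tauto)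
      (fun ω => (U ω, (Z1 ω, (Z2 ω, X ω)))) _ (fun ω => rfl)
  have r8 : Hent μ (fun ω => ((U ω, Z1 ω), (W ω, (Z2 ω, X ω))))
      = Hent μ (fun ω => (W ω, (U ω, (Z1 ω, (Z2 ω, X ω))))) :=
    Hent_comp' μ (fun p => ((p.2.1, p.2.2.1), (p.1, p.2.2.2)))
      (by rintro ⟨a1, a2, a3, a4⟩ ⟨b1, b2, b3, b4⟩ h; simp only [Prod.mk.injEq] at h ⊢; tauto)
      (fun ω => (W ω, (U ω, (Z1 ω, (Z2 ω, X ω))))) _ (fun ω => rfl)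
  have r9 : Hent μ (fun ω => (U ω, (W ω, (Z2 ω, X ω))))
      = Hent μ (fun ω => (W ω, (U ω, (Z2 ω, X ω)))) :=
    Hent_comp' μ (fun p => (p.2.1, (p.1, p.2.2)))
      (by rintro ⟨a1, a2, a3⟩ ⟨b1, b2, b3⟩ h; simp only [Prod.mk.injEq] at h ⊢; tauto)
      (fun ω => (W ω, (U ω, (Z2 ω, X ω)))) _ (fun ω => rfl)
  have r10 : Hent μ (fun ω => (Z1 ω, (W ω, (Z2 ω, X ω))))
      = Hent μ (fun ω => (W ω, (Z1 ω, (Z2 ω, X ω)))) :=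
    Hent_comp' μ (fun p => (p.2.1, (p.1, p.2.2)))
      (by rintro ⟨a1, a2, a3⟩ ⟨b1, b2, b3⟩ h; simp only [Prod.mk.injEq] at h ⊢; tauto)
      (fun ω => (W ω, (Z1 ω, (Z2 ω, X ω)))) _ (fun ω => rfl)
  simp only [CMI, HcondEnt, MI]
  linarith [F1, F2, F3, F4, Ga, Gb, r1, r2, r3, r4, r5, r6, r7, r8, r9, r10]
end

section
/- Let ε ≥ 0 and let W_a, W_b, X_a, X_b, Z_0, Z_a, Z_b be finite-valued random variables on a common probability space satisfying: (i) I(W_a; Z_a | X_a) ≤ ε; (ii) Z_0 ⊥ (W_a, X_a, X_b); (iii) W_b ⊥ (Z_a, X_a, X_b, W_a); (iv) W_b ⊥ (X_b, Z_b); (v) (W_a, Z_a, X_a) ⊥ (Z_b, X_b, W_b, Z_0); (vi) Z_0 ⊥ (W_b, X_b, Z_b). Then I((W_a, W_b); (Z_0, Z_a, Z_b) | (X_a, X_b)) ≤ ε. -/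
open MeasureTheory ProbabilityTheory Real
open scoped Classical

lemma measure_preimage_inter_sum {Ω : Type*} [MeasurableSpace Ω] (μ : Measure Ω)
    {S : Type*} [Fintype S] [MeasurableSpace S] [MeasurableSingletonClass S]
    {X : Ω → S} (hX : Measurable X) (U : Set S) {C : Set Ω} (hC : MeasurableSet C) :
    μ (X ⁻¹' U ∩ C) = ∑ s ∈ Finset.univ.filter (· ∈ U), μ (X ⁻¹' {s} ∩ C) := by
  have hd : Set.PairwiseDisjoint ↑(Finset.univ.filter (· ∈ U))
      (fun s => X ⁻¹' {s} ∩ C) := by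
    intro a _ b _ hab
    apply Set.disjoint_left.mpr
    rintro ω ⟨ha, _⟩ ⟨hb, _⟩
    exact hab (ha.symm.trans hb)
  have hm : ∀ s ∈ Finset.univ.filter (· ∈ U),
      MeasurableSet (X ⁻¹' {s} ∩ C) :=
    fun s _ => (hX (measurableSet_singleton s)).inter hC
  rw [← measure_biUnion_finset hd hm]
  congr 1
  ext ω
  simp only [Set.mem_iUnion, Finset.mem_filter, Finset.mem_univ, true_and,
    Set.mem_inter_iff, Set.mem_preimage, Set.mem_singleton_iff]
  constructor
  · rintro ⟨hU, hCω⟩; exact ⟨X ω, hU, rfl, hCω⟩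
  · rintro ⟨s, hs, rfl, hCω⟩; exact ⟨hs, hCω⟩

lemma measure_preimage_sum {Ω : Type*} [MeasurableSpace Ω] (μ : Measure Ω)
    {S : Type*} [Fintype S] [MeasurableSpace S] [MeasurableSingletonClass S]
    {X : Ω → S} (hX : Measurable X) (U : Set S) :
    μ (X ⁻¹' U) = ∑ s ∈ Finset.univ.filter (· ∈ U), μ (X ⁻¹' {s}) := by
  have := measure_preimage_inter_sum μ hX U MeasurableSet.univ
  simpa using this

lemma indepRV_comp {Ω : Type*} [MeasurableSpace Ω] (μ : Measure Ω)
    {S T S' T' : Type*} [Fintype S] [Fintype T]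
    [MeasurableSpace S] [MeasurableSingletonClass S]
    [MeasurableSpace T] [MeasurableSingletonClass T]
    {X : Ω → S} {Y : Ω → T} (hX : Measurable X) (hY : Measurable Y)
    (h : IndepRV μ X Y) (f : S → S') (g : T → T') :
    IndepRV μ (fun ω => f (X ω)) (fun ω => g (Y ω)) := by
  intro x y
  have hBm : MeasurableSet (Y ⁻¹' (g ⁻¹' {y})) := hY ((Set.toFinite _).measurableSet)
  show μ (X ⁻¹' (f ⁻¹' {x}) ∩ Y ⁻¹' (g ⁻¹' {y}))
      = μ (X ⁻¹' (f ⁻¹' {x})) * μ (Y ⁻¹' (g ⁻¹' {y}))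
  rw [measure_preimage_inter_sum μ hX _ hBm, measure_preimage_sum μ hX,
      Finset.sum_mul]
  apply Finset.sum_congr rfl
  intro s _
  rw [Set.inter_comm, measure_preimage_inter_sum μ hY _ (hX (measurableSet_singleton s)),
      measure_preimage_sum μ hY, Finset.mul_sum]
  apply Finset.sum_congr rfl
  intro t _
  rw [Set.inter_comm, h s t]

lemma sum_measure_toReal_one {Ω : Type*} [MeasurableSpace Ω] (μ : Measure Ω)
    [IsProbabilityMeasure μ]
    {S : Type*} [Fintype S] [MeasurableSpace S] [MeasurableSingletonClass S]
    {X : Ω → S} (hX : Measurable X) :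
    ∑ s : S, (μ (X ⁻¹' {s})).toReal = 1 := by
  rw [← ENNReal.toReal_sum (fun s _ => measure_ne_top μ _)]
  rw [sum_measure_preimage_singleton _ (fun s _ => hX (measurableSet_singleton s))]
  simp

lemma Hent_comp_of_injective {Ω : Type*} [MeasurableSpace Ω] (μ : Measure Ω)
    {S T : Type*} [Fintype S] [Fintype T] (X : Ω → S) (e : S → T)
    (he : Function.Injective e) :
    Hent μ (fun ω => e (X ω)) = Hent μ X := by
  unfold Hent
  rw [← Finset.sum_subset (Finset.subset_univ (Finset.univ.image e))]
  · rw [Finset.sum_image (fun a _ b _ hab => he hab)]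
    apply Finset.sum_congr rfl
    intro s _
    have : (fun ω => e (X ω)) ⁻¹' {e s} = X ⁻¹' {s} := by
      ext ω; simp [he.eq_iff]
    rw [this]
  · intro t _ ht
    have : (fun ω => e (X ω)) ⁻¹' {t} = ∅ := by
      ext ω
      simp only [Set.mem_preimage, Set.mem_singleton_iff, Set.mem_empty_iff_false,
        iff_false]
      intro hc
      exact ht (Finset.mem_image.mpr ⟨X ω, Finset.mem_univ _, hc⟩)
    simp [this, Real.negMulLog_zero]

lemma Hent_indep {Ω : Type*} [MeasurableSpace Ω] (μ : Measure Ω)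
    [IsProbabilityMeasure μ]
    {S T : Type*} [Fintype S] [Fintype T]
    [MeasurableSpace S] [MeasurableSingletonClass S]
    [MeasurableSpace T] [MeasurableSingletonClass T]
    {X : Ω → S} {Y : Ω → T} (hX : Measurable X) (hY : Measurable Y)
    (h : IndepRV μ X Y) :
    Hent μ (fun ω => (X ω, Y ω)) = Hent μ X + Hent μ Y := by
  have hpre : ∀ s t, (μ ((fun ω => (X ω, Y ω)) ⁻¹' {(s, t)})).toReal
      = (μ (X ⁻¹' {s})).toReal * (μ (Y ⁻¹' {t})).toReal := by
    intro s t
    have : (fun ω => (X ω, Y ω)) ⁻¹' {(s, t)} = X ⁻¹' {s} ∩ Y ⁻¹' {t} := by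
      ext ω; simp [Prod.ext_iff]
    rw [this, h s t, ENNReal.toReal_mul]
  unfold Hent
  rw [Fintype.sum_prod_type]
  have key : ∀ s : S, ∑ t : T,
      Real.negMulLog (μ ((fun ω => (X ω, Y ω)) ⁻¹' {(s, t)})).toReal
      = Real.negMulLog (μ (X ⁻¹' {s})).toReal
        + (μ (X ⁻¹' {s})).toReal * ∑ t : T, Real.negMulLog (μ (Y ⁻¹' {t})).toReal := by
    intro s
    simp_rw [hpre, Real.negMulLog_mul]
    rw [Finset.sum_add_distrib, ← Finset.sum_mul, ← Finset.mul_sum,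
      sum_measure_toReal_one μ hY]
    ring
  simp_rw [key]
  rw [Finset.sum_add_distrib, ← Finset.sum_mul, sum_measure_toReal_one μ hX]
  ring

/-- slot-2 leakage analysis. Under the wiretap-coding leakage bound (i)
and the independence hypotheses (ii)–(vi),
`I((W_a, W_b); (Z_0, Z_a, Z_b) | (X_a, X_b)) ≤ ε`. -/
theorem slot_two_leakage_bound
    {Ω : Type*} [MeasurableSpace Ω] (μ : Measure Ω) [IsProbabilityMeasure μ]
    {A B C D E F G : Type*}
    [Fintype A] [Fintype B] [Fintype C] [Fintype D] [Fintype E] [Fintype F] [Fintype G]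
    [MeasurableSpace A] [MeasurableSingletonClass A]
    [MeasurableSpace B] [MeasurableSingletonClass B]
    [MeasurableSpace C] [MeasurableSingletonClass C]
    [MeasurableSpace D] [MeasurableSingletonClass D]
    [MeasurableSpace E] [MeasurableSingletonClass E]
    [MeasurableSpace F] [MeasurableSingletonClass F]
    [MeasurableSpace G] [MeasurableSingletonClass G]
    (Wa : Ω → A) (Wb : Ω → B) (Xa : Ω → C) (Xb : Ω → D)
    (Z0 : Ω → E) (Za : Ω → F) (Zb : Ω → G)
    (hWa : Measurable Wa) (hWb : Measurable Wb) (hXa : Measurable Xa)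
    (hXb : Measurable Xb) (hZ0 : Measurable Z0) (hZa : Measurable Za)
    (hZb : Measurable Zb)
    (ε : ℝ) (hε : 0 ≤ ε)
    (h1 : CMI μ Wa Za Xa ≤ ε)
    (h2 : IndepRV μ Z0 (fun ω => (Wa ω, Xa ω, Xb ω)))
    (h3 : IndepRV μ Wb (fun ω => (Za ω, Xa ω, Xb ω, Wa ω)))
    (h4 : IndepRV μ Wb (fun ω => (Xb ω, Zb ω)))
    (h5 : IndepRV μ (fun ω => (Wa ω, Za ω, Xa ω)) (fun ω => (Zb ω, Xb ω, Wb ω, Z0 ω)))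
    (h6 : IndepRV μ Z0 (fun ω => (Wb ω, Xb ω, Zb ω))) :
    CMI μ (fun ω => (Wa ω, Wb ω)) (fun ω => (Z0 ω, Za ω, Zb ω))
      (fun ω => (Xa ω, Xb ω)) ≤ ε := by
  
  classical
  have hG1 : Measurable (fun ω => (Wa ω, Za ω, Xa ω)) := hWa.prodMk (hZa.prodMk hXa)
  have hG2 : Measurable (fun ω => (Zb ω, Xb ω, Wb ω, Z0 ω)) :=
    hZb.prodMk (hXb.prodMk (hWb.prodMk hZ0))
  have hXbZb : Measurable (fun ω => (Xb ω, Zb ω)) := hXb.prodMk hZb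
  have hWbXbZb : Measurable (fun ω => (Wb ω, Xb ω, Zb ω)) := hWb.prodMk hXbZb
  have i1 : IndepRV μ (fun ω => (Wa ω, Xa ω)) (fun ω => (Wb ω, Xb ω)) :=
    indepRV_comp μ hG1 hG2 h5 (fun p => (p.1, p.2.2)) (fun q => (q.2.2.1, q.2.1))
  have i2 : IndepRV μ Xa Xb :=
    indepRV_comp μ hG1 hG2 h5 (fun p => p.2.2) (fun q => q.2.1)
  have i3 : IndepRV μ (fun ω => (Za ω, Xa ω)) (fun ω => ((Z0 ω, Zb ω), Xb ω)) :=
    indepRV_comp μ hG1 hG2 h5 (fun p => (p.2.1, p.2.2)) (fun q => ((q.2.2.2, q.1), q.2.1))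
  have i4a : IndepRV μ Wb Xb :=
    indepRV_comp μ hWb hXbZb h4 (fun b => b) (fun q => q.1)
  have i6a : IndepRV μ Z0 (fun ω => (Xb ω, Zb ω)) :=
    indepRV_comp μ hZ0 hWbXbZb h6 (fun e => e) (fun q => (q.2.1, q.2.2))
  have E1 : Hent μ (fun ω => ((Wa ω, Wb ω), (Xa ω, Xb ω)))
      = Hent μ (fun ω => (Wa ω, Xa ω)) + Hent μ (fun ω => (Wb ω, Xb ω)) := by
    rw [← Hent_indep μ (hWa.prodMk hXa) (hWb.prodMk hXb) i1]
    exact Hent_comp_of_injective μ (fun ω => ((Wa ω, Xa ω), (Wb ω, Xb ω)))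
      (fun p => ((p.1.1, p.2.1), (p.1.2, p.2.2)))
      (by rintro ⟨⟨a, c⟩, b, d⟩ ⟨⟨a', c'⟩, b', d'⟩ hpq
          simp only [Prod.mk.injEq] at hpq ⊢; tauto)
  have E1b : Hent μ (fun ω => (Wb ω, Xb ω)) = Hent μ Wb + Hent μ Xb :=
    Hent_indep μ hWb hXb i4a
  have E4 : Hent μ (fun ω => (Xa ω, Xb ω)) = Hent μ Xa + Hent μ Xb :=
    Hent_indep μ hXa hXb i2
  have E2 : Hent μ (fun ω => ((Z0 ω, Za ω, Zb ω), (Xa ω, Xb ω)))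
      = Hent μ (fun ω => (Za ω, Xa ω)) + Hent μ (fun ω => ((Z0 ω, Zb ω), Xb ω)) := by
    rw [← Hent_indep μ (hZa.prodMk hXa) ((hZ0.prodMk hZb).prodMk hXb) i3]
    exact Hent_comp_of_injective μ (fun ω => ((Za ω, Xa ω), ((Z0 ω, Zb ω), Xb ω)))
      (fun p => ((p.2.1.1, p.1.1, p.2.1.2), (p.1.2, p.2.2)))
      (by rintro ⟨⟨a, c⟩, ⟨e0, e1⟩, d⟩ ⟨⟨a', c'⟩, ⟨e0', e1'⟩, d'⟩ hpq
          simp only [Prod.mk.injEq] at hpq ⊢; tauto)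
  have E2b : Hent μ (fun ω => ((Z0 ω, Zb ω), Xb ω))
      = Hent μ Z0 + Hent μ (fun ω => (Xb ω, Zb ω)) := by
    rw [← Hent_indep μ hZ0 hXbZb i6a]
    exact Hent_comp_of_injective μ (fun ω => (Z0 ω, (Xb ω, Zb ω)))
      (fun p => ((p.1, p.2.2), p.2.1))
      (by rintro ⟨a, c, d⟩ ⟨a', c', d'⟩ hpq
          simp only [Prod.mk.injEq] at hpq ⊢; tauto)
  have E3 : Hent μ (fun ω => (((Wa ω, Wb ω), (Z0 ω, Za ω, Zb ω)), (Xa ω, Xb ω)))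
      = Hent μ (fun ω => (Wa ω, Za ω, Xa ω)) + Hent μ (fun ω => (Zb ω, Xb ω, Wb ω, Z0 ω)) := by
    rw [← Hent_indep μ hG1 hG2 h5]
    exact Hent_comp_of_injective μ
      (fun ω => ((Wa ω, Za ω, Xa ω), (Zb ω, Xb ω, Wb ω, Z0 ω)))
      (fun p => (((p.1.1, p.2.2.2.1), (p.2.2.2.2, p.1.2.1, p.2.1)), (p.1.2.2, p.2.2.1)))
      (by rintro ⟨⟨a, f, c⟩, g, d, b, e⟩ ⟨⟨a', f', c'⟩, g', d', b', e'⟩ hpq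
          simp only [Prod.mk.injEq] at hpq ⊢; tauto)
  have E3a : Hent μ (fun ω => ((Wa ω, Za ω), Xa ω)) = Hent μ (fun ω => (Wa ω, Za ω, Xa ω)) :=
    Hent_comp_of_injective μ (fun ω => (Wa ω, Za ω, Xa ω)) (fun p => ((p.1, p.2.1), p.2.2))
      (by rintro ⟨a, f, c⟩ ⟨a', f', c'⟩ hpq
          simp only [Prod.mk.injEq] at hpq ⊢; tauto)
  have E3b : Hent μ (fun ω => (Zb ω, Xb ω, Wb ω, Z0 ω))
      = Hent μ Z0 + (Hent μ Wb + Hent μ (fun ω => (Xb ω, Zb ω))) := by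
    have r : Hent μ (fun ω => (Zb ω, Xb ω, Wb ω, Z0 ω))
        = Hent μ (fun ω => (Z0 ω, Wb ω, Xb ω, Zb ω)) :=
      (Hent_comp_of_injective μ (fun ω => (Z0 ω, Wb ω, Xb ω, Zb ω))
        (fun p => (p.2.2.2, p.2.2.1, p.2.1, p.1))
        (by rintro ⟨e, b, d, g⟩ ⟨e', b', d', g'⟩ hpq
            simp only [Prod.mk.injEq] at hpq ⊢; tauto))
    rw [r, Hent_indep μ hZ0 hWbXbZb h6, Hent_indep μ hWb hXbZb h4]
  simp only [CMI, HcondEnt] at h1 ⊢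
  linarith [E1, E1b, E2, E2b, E3, E3a, E3b, E4]
end
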